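/- arXiv:2403.04081 — 10 statements merged into one kernel-verified Lean document; each statement's English description precedes it below -/
import Mathlib

section
/- Let f : ℝ^d → ℝ be convex and differentiable. Then for all x, y ∈ ℝ^d with x ≠ y, f(y) ≤ f(x) + ⟨∇f(x), y − x⟩ + (D(x,y)/2)·‖y − x‖², where D(x,y) = 2‖∇f(y) − ∇f(x)‖/‖y − x‖ is the point-wise directional smoothness. -/
open scoped RealInnerProductSpace

/-- **Point-wise directional smoothness bound.**
If `f : ℝ^d → ℝ` is convex and differentiable with gradient `f'`, then for all `x ≠ y`,
`f y ≤ f x + ⟪∇f x, y - x⟫ + (D x y / 2) ‖y - x‖²` where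
`D x y = 2 ‖∇f y - ∇f x‖ / ‖y - x‖`. -/
theorem pointwise_directional_smoothness {d : ℕ}
    (f : EuclideanSpace ℝ (Fin d) → ℝ)
    (f' : EuclideanSpace ℝ (Fin d) → EuclideanSpace ℝ (Fin d))
    (hconv : ConvexOn ℝ Set.univ f)
    (hgrad : ∀ z, HasGradientAt f (f' z) z)
    (x y : EuclideanSpace ℝ (Fin d)) (hxy : x ≠ y) :
    f y ≤ f x + ⟪f' x, y - x⟫ +
      (2 * ‖f' y - f' x‖ / ‖y - x‖) / 2 * ‖y - x‖ ^ 2 := by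
  set v := y - x with hv
  have hvne : ‖v‖ ≠ 0 := by
    simp only [hv, norm_ne_zero_iff, sub_ne_zero]
    exact fun h => hxy h.symm
  set g : ℝ → ℝ := fun t => f (x + t • v) with hg
  have hgconv : ConvexOn ℝ Set.univ g := by
    have h := hconv.comp_affineMap (AffineMap.lineMap x y)
    have he : (f ∘ ⇑(AffineMap.lineMap x y)) = g := by
      funext t
      simp only [Function.comp_apply, AffineMap.lineMap_apply, hg, hv]
      congr 1
      rw [vsub_eq_sub, vadd_eq_add]
      abel
    simpa [he] using h
  have hgd : ∀ t : ℝ, HasDerivAt g ⟪f' (x + t • v), v⟫ t := by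
    intro t
    have hline : HasDerivAt (fun t : ℝ => x + t • v) v t := by
      simpa using ((hasDerivAt_id t).smul_const v).const_add x
    have h1 := (hgrad (x + t • v)).hasFDerivAt.comp_hasDerivAt t hline
    exact h1
  have key : slope g 0 1 ≤ ⟪f' (x + (1:ℝ) • v), v⟫ :=
    hgconv.slope_le_of_hasDerivAt (Set.mem_univ 0) (Set.mem_univ 1) one_pos (hgd 1)
  have hx1 : x + (1:ℝ) • v = y := by rw [one_smul, hv]; abel
  rw [hx1] at key
  have hslope : slope g 0 1 = f y - f x := by
    have h0 : g 0 = f x := by simp [hg]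
    have h1 : g 1 = f y := by rw [hg]; simp only; rw [hx1]
    simp [slope, h0, h1]
  rw [hslope] at key
  have hsplit : ⟪f' x, v⟫ + ⟪f' y - f' x, v⟫ = ⟪f' y, v⟫ := by
    rw [← inner_add_left]
    congr 1
    abel
  have hcs : ⟪f' y - f' x, v⟫ ≤ ‖f' y - f' x‖ * ‖v‖ := real_inner_le_norm _ _
  have heq : (2 * ‖f' y - f' x‖ / ‖v‖) / 2 * ‖v‖ ^ 2 = ‖f' y - f' x‖ * ‖v‖ := by
    field_simp
  rw [heq]
  linarith
end

section
/- For every t < 2 there exist a convex, differentiable function f : ℝ → ℝ and points x, y ∈ ℝ with x ≠ y such that f(y) > f(x) + f'(x)·(y − x) + (t·|f'(x) − f'(y)|/(2|y − x|))·|y − x|². Hence the factor 2 in the point-wise directional smoothness bound cannot be improved. -/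
open Real

lemma softplus_hasDerivAt (u : ℝ) :
    HasDerivAt (fun v : ℝ => Real.log (1 + Real.exp v)) (Real.exp u / (1 + Real.exp u)) u := by
  have h1 : (0:ℝ) < 1 + Real.exp u := by positivity
  have := ((Real.hasDerivAt_exp u).const_add 1).log h1.ne'
  simpa using this

lemma softplus_deriv : deriv (fun v : ℝ => Real.log (1 + Real.exp v)) =
    fun u => Real.exp u / (1 + Real.exp u) := by
  funext u
  exact (softplus_hasDerivAt u).deriv

/-- **Tightness of the factor 2 in point-wise directional smoothness.**
For every `t < 2` there exist a convex, differentiable `f : ℝ → ℝ` and points `x ≠ y`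
such that `f y > f x + f' x * (y - x) + (t * |f' x - f' y| / (2 * |y - x|)) * |y - x|²`. -/
theorem pointwise_directional_smoothness_tight (t : ℝ) (ht : t < 2) :
    ∃ (f : ℝ → ℝ) (x y : ℝ), ConvexOn ℝ Set.univ f ∧ Differentiable ℝ f ∧ x ≠ y ∧
      f y > f x + deriv f x * (y - x) +
        t * |deriv f x - deriv f y| / (2 * |y - x|) * |y - x| ^ 2 := by
  set f : ℝ → ℝ := fun v => Real.log (1 + Real.exp v) with hf
  have hdiff : Differentiable ℝ f := fun u => (softplus_hasDerivAt u).differentiableAt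
  have ht2 : (0:ℝ) < 2 - t := by linarith
  set M : ℝ := 4 / (2 - t) + 2 with hM
  have hMpos : 0 < M := by positivity
  have hmono : Monotone (deriv f) := by
    rw [softplus_deriv]
    intro a b hab
    have ha : (0:ℝ) < 1 + Real.exp a := by positivity
    have hb : (0:ℝ) < 1 + Real.exp b := by positivity
    rw [div_le_div_iff₀ ha hb]
    have := Real.exp_le_exp.2 hab
    nlinarith
  refine ⟨f, 0, M, hmono.convexOn_univ_of_deriv hdiff, hdiff, by positivity, ?_⟩
  rw [softplus_deriv]
  simp only [Real.exp_zero]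
  set s : ℝ := Real.exp M / (1 + Real.exp M) with hs
  have hexpM : 1 ≤ Real.exp M := by
    rw [← Real.exp_zero]; exact Real.exp_le_exp.2 hMpos.le
  have hs1 : (1:ℝ)/2 ≤ s := by
    rw [hs, le_div_iff₀ (by positivity)]
    nlinarith
  have hs2 : s ≤ 1 := by
    rw [hs, div_le_one (by positivity)]
    linarith
  have hfM : M ≤ f M := by
    rw [hf]
    calc M = Real.log (Real.exp M) := (Real.log_exp M).symm
    _ ≤ Real.log (1 + Real.exp M) := by
        apply Real.log_le_log (Real.exp_pos M)
        linarith
  have hf0 : f 0 = Real.log 2 := by norm_num [hf]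
  have hlog2 : Real.log 2 < 1 := by
    have := Real.log_two_lt_d9
    linarith
  have habs : |1 / (1 + 1) - s| = s - 1/2 := by
    rw [abs_of_nonpos (by norm_num; linarith)]
    norm_num
  have habsM : |M| = M := abs_of_pos hMpos
  rw [hf0, sub_zero, habs, habsM]
  have hkey : Real.log 2 < M / 2 - t * (s - 1/2) * M / 2 := by
    have hMval : M * (2 - t) = 8 - 2 * t := by
      rw [hM, add_mul, div_mul_cancel₀ _ ht2.ne']
      ring
    rcases le_or_gt 0 t with htpos | htneg
    · have h1 : t * (s - 1/2) ≤ t / 2 := by nlinarith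
      have hmul : t * (s - 1/2) * M ≤ t / 2 * M :=
        mul_le_mul_of_nonneg_right h1 hMpos.le
      have h2 : M / 2 - t * (s - 1/2) * M / 2 ≥ M * (2 - t) / 4 := by linarith
      have h3 : M * (2 - t) / 4 = 2 - t / 2 := by rw [hMval]; ring
      nlinarith
    · have h1 : t * (s - 1/2) ≤ 0 := mul_nonpos_of_nonpos_of_nonneg htneg.le (by linarith)
      have h4 : 4 / (2 - t) > 0 := by positivity
      have hM2 : M ≥ 2 := by rw [hM]; linarith
      nlinarith
  have heq : t * (s - 1/2) / (2 * M) * M ^ 2 = t * (s - 1/2) * M / 2 := by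
    field_simp
  rw [heq]
  have h5 : (1:ℝ) / (1 + 1) * M = M / 2 := by ring
  rw [h5]
  clear hM hs
  clear_value M s
  linarith [hkey, hfM]
end

section
/- Let f : ℝ^d → ℝ be differentiable and let x, y ∈ ℝ^d with x ≠ y. Define the path-wise directional smoothness A(x,y) = sup over t ∈ (0,1] of ⟨∇f(x + t(y − x)) − ∇f(x), y − x⟩ / (t‖y − x‖²), assumed finite. Then f(y) ≤ f(x) + ⟨∇f(x), y − x⟩ + (A(x,y)/2)·‖y − x‖². -/
open scoped RealInnerProductSpace

/-- **Path-wise directional smoothness bound.**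
If `f : ℝ^d → ℝ` is differentiable with gradient `f'`, `x ≠ y`, and `A` is the supremum over
`t ∈ (0,1]` of `⟪∇f(x + t(y-x)) - ∇f x, y - x⟫ / (t ‖y - x‖²)` (assumed finite, i.e. `A` is a
least upper bound), then `f y ≤ f x + ⟪∇f x, y - x⟫ + (A/2) ‖y - x‖²`. -/
theorem pathwise_directional_smoothness {d : ℕ}
    (f : EuclideanSpace ℝ (Fin d) → ℝ)
    (f' : EuclideanSpace ℝ (Fin d) → EuclideanSpace ℝ (Fin d))
    (hgrad : ∀ z, HasGradientAt f (f' z) z)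
    (x y : EuclideanSpace ℝ (Fin d)) (hxy : x ≠ y)
    (A : ℝ)
    (hA : IsLUB {r : ℝ | ∃ t ∈ Set.Ioc (0:ℝ) 1,
        r = ⟪f' (x + t • (y - x)) - f' x, y - x⟫ / (t * ‖y - x‖ ^ 2)} A) :
    f y ≤ f x + ⟪f' x, y - x⟫ + A / 2 * ‖y - x‖ ^ 2 := by
  set l : ℝ → EuclideanSpace ℝ (Fin d) := fun t => x + t • (y - x) with hl
  have hld : ∀ t : ℝ, HasDerivAt l (y - x) t := by
    intro t
    have := ((hasDerivAt_id t).smul_const (y - x)).const_add x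
    rw [one_smul] at this
    exact this
  set h : ℝ → ℝ := fun t =>
    f (l t) - f x - t * ⟪f' x, y - x⟫ - A / 2 * t ^ 2 * ‖y - x‖ ^ 2 with hh
  have hhd : ∀ t : ℝ, HasDerivAt h
      (⟪f' (l t), y - x⟫ - ⟪f' x, y - x⟫ - A * t * ‖y - x‖ ^ 2) t := by
    intro t
    have h1 : HasDerivAt (fun t => f (l t)) (⟪f' (l t), y - x⟫) t := by
      have := ((hgrad (l t)).hasFDerivAt).comp_hasDerivAt t (hld t)
      simp [InnerProductSpace.toDual_apply_apply] at this
      exact this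
    have h2 : HasDerivAt (fun t : ℝ => t * ⟪f' x, y - x⟫) (⟪f' x, y - x⟫) t := by
      simpa using (hasDerivAt_id t).mul_const (⟪f' x, y - x⟫)
    have h3 : HasDerivAt (fun t : ℝ => A / 2 * t ^ 2 * ‖y - x‖ ^ 2)
        (A * t * ‖y - x‖ ^ 2) t := by
      have := ((hasDerivAt_pow 2 t).const_mul (A / 2)).mul_const (‖y - x‖ ^ 2)
      exact this.congr_deriv (by push_cast; ring)
    exact ((h1.sub_const (f x)).sub h2).sub h3
  have hnorm : (0:ℝ) < ‖y - x‖ ^ 2 := by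
    have : y - x ≠ 0 := sub_ne_zero.mpr hxy.symm
    have := norm_pos_iff.mpr this
    positivity
  have key : h 1 ≤ h 0 := by
    have hcont : ContinuousOn h (Set.Icc 0 1) :=
      fun t _ => ((hhd t).differentiableAt.continuousAt).continuousWithinAt
    have := antitoneOn_of_deriv_nonpos (convex_Icc (0:ℝ) 1) hcont
      (fun t ht => by
        rw [interior_Icc] at ht
        exact ((hhd t).differentiableAt.differentiableWithinAt))
      (fun t ht => by
        rw [interior_Icc] at ht
        rw [(hhd t).deriv]
        have hmem : ⟪f' (l t) - f' x, y - x⟫ / (t * ‖y - x‖ ^ 2) ≤ A :=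
          hA.1 ⟨t, ⟨ht.1, ht.2.le⟩, rfl⟩
        have hpos : 0 < t * ‖y - x‖ ^ 2 := mul_pos ht.1 hnorm
        rw [div_le_iff₀ hpos] at hmem
        rw [inner_sub_left] at hmem
        nlinarith)
    exact this (Set.left_mem_Icc.2 zero_le_one) (Set.right_mem_Icc.2 zero_le_one)
      zero_le_one
  have hl1 : l 1 = y := by simp [hl]
  have hl0 : l 0 = x := by simp [hl]
  simp only [hh, hl1, hl0] at key
  nlinarith [key]
end

section
/- Let f : ℝ^d → ℝ be convex and differentiable with minimizer x*, let M be a directional smoothness function for f, and let x_{i+1} = x_i − η_i ∇f(x_i) be GD iterates with step-sizes η_i > 0. Write δ_i = f(x_i) − f(x*), M_i = M(x_i, x_{i+1}), μ_i = μ(x_i, x*) (the directional strong convexity constant between x_i and x*), λ_i = η_i M_i − 2, 𝒢 = {i < k : η_i < 2/M_i}, and ℬ = {0,…,k−1} \ 𝒢. Then δ_k ≤ [∏_{i ∈ 𝒢} (1 + η_i λ_i μ_i)] · δ_0 + Σ_{i ∈ ℬ} [∏_{j ∈ 𝒢, j > i} (1 + η_j λ_j μ_j)] · (η_i λ_i /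 2) · ‖∇f(x_i)‖². -/
open scoped RealInnerProductSpace Classical

/-- The directional strong convexity constant
`μ(x,y) = inf_{t ∈ (0,1]} ⟪∇f(x + t(y-x)) - ∇f x, y - x⟫ / (t ‖y - x‖²)` for `x ≠ y`,
and `0` if `x = y`. -/
noncomputable def muDir {d : ℕ}
    (f' : EuclideanSpace ℝ (Fin d) → EuclideanSpace ℝ (Fin d))
    (x y : EuclideanSpace ℝ (Fin d)) : ℝ :=
  if x = y then 0
  else sInf {r : ℝ | ∃ t ∈ Set.Ioc (0:ℝ) 1,
    r = ⟪f' (x + t • (y - x)) - f' x, y - x⟫ / (t * ‖y - x‖ ^ 2)}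

variable {d : ℕ}
local notation "E" => EuclideanSpace ℝ (Fin d)

theorem tangent_line (f : E → ℝ) (f' : E → E) (hconv : ConvexOn ℝ Set.univ f)
    (hgrad : ∀ z, HasGradientAt f (f' z) z) (x y : E) :
    f x + ⟪f' x, y - x⟫ ≤ f y := by
  have hc : ∀ t : ℝ, HasDerivAt (fun t : ℝ => x + t • (y - x)) (y - x) t := by
    intro t
    simpa using ((hasDerivAt_id t).smul_const (y - x)).const_add x
  have hφ : ∀ t : ℝ, HasDerivAt (fun t : ℝ => f (x + t • (y - x)))
      ⟪f' (x + t • (y - x)), y - x⟫ t := by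
    intro t
    have := ((hgrad (x + t • (y - x))).hasFDerivAt).comp_hasDerivAt t (hc t)
    simp at this
    exact this
  have hφconv : ConvexOn ℝ Set.univ (fun t : ℝ => f (x + t • (y - x))) := by
    have := hconv.comp_affineMap (AffineMap.lineMap x y)
    simp only [Set.preimage_univ] at this
    refine this.congr fun t _ => ?_
    simp [AffineMap.lineMap_apply, add_comm]
  have h0 : HasDerivAt (fun t : ℝ => f (x + t • (y - x))) ⟪f' x, y - x⟫ 0 := by
    simpa using hφ 0
  have := hφconv.le_slope_of_hasDerivAt (Set.mem_univ (0:ℝ)) (Set.mem_univ (1:ℝ))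
      one_pos h0
  rw [slope_def_field] at this
  simp only [one_smul, add_sub_cancel, zero_smul, add_zero, sub_zero, div_one] at this
  linarith

theorem grad_mono (f : E → ℝ) (f' : E → E) (hconv : ConvexOn ℝ Set.univ f)
    (hgrad : ∀ z, HasGradientAt f (f' z) z) (a b : E) :
    0 ≤ ⟪f' a - f' b, a - b⟫ := by
  have h1 := tangent_line f f' hconv hgrad a b
  have h2 := tangent_line f f' hconv hgrad b a
  have e1 : ⟪f' a - f' b, a - b⟫ = - ⟪f' a, b - a⟫ - ⟪f' b, a - b⟫ := by
    rw [inner_sub_left]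
    have : ⟪f' a, a - b⟫ = - ⟪f' a, b - a⟫ := by
      rw [← inner_neg_right]; congr 1; abel
    rw [this]
  rw [e1]; linarith

theorem muDir_elem_nonneg (f : E → ℝ) (f' : E → E) (hconv : ConvexOn ℝ Set.univ f)
    (hgrad : ∀ z, HasGradientAt f (f' z) z) (x y : E) (t : ℝ) (ht : t ∈ Set.Ioc (0:ℝ) 1) :
    0 ≤ ⟪f' (x + t • (y - x)) - f' x, y - x⟫ / (t * ‖y - x‖ ^ 2) := by
  have h := grad_mono f f' hconv hgrad (x + t • (y - x)) x
  have e : x + t • (y - x) - x = t • (y - x) := by abel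
  rw [e, real_inner_smul_right] at h
  have hnum : 0 ≤ ⟪f' (x + t • (y - x)) - f' x, y - x⟫ :=
    nonneg_of_mul_nonneg_right (by linarith [h]) ht.1
  exact div_nonneg hnum (mul_nonneg ht.1.le (sq_nonneg _))

theorem muDir_nonneg (f : E → ℝ) (f' : E → E) (hconv : ConvexOn ℝ Set.univ f)
    (hgrad : ∀ z, HasGradientAt f (f' z) z) (x y : E) :
    0 ≤ muDir f' x y := by
  unfold muDir
  split
  · exact le_rfl
  · exact Real.sInf_nonneg (by rintro r ⟨t, ht, rfl⟩; exact muDir_elem_nonneg f f' hconv hgrad x y t ht)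

theorem muDir_le (f : E → ℝ) (f' : E → E) (hconv : ConvexOn ℝ Set.univ f)
    (hgrad : ∀ z, HasGradientAt f (f' z) z) (x y : E) (hxy : x ≠ y)
    (t : ℝ) (ht : t ∈ Set.Ioc (0:ℝ) 1) :
    muDir f' x y ≤ ⟪f' (x + t • (y - x)) - f' x, y - x⟫ / (t * ‖y - x‖ ^ 2) := by
  unfold muDir
  rw [if_neg hxy]
  exact csInf_le ⟨0, by rintro r ⟨s, hs, rfl⟩; exact muDir_elem_nonneg f f' hconv hgrad x y s hs⟩
    ⟨t, ht, rfl⟩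

theorem muDir_lower (f : E → ℝ) (f' : E → E) (hconv : ConvexOn ℝ Set.univ f)
    (hgrad : ∀ z, HasGradientAt f (f' z) z) (x y : E) :
    f x + ⟪f' x, y - x⟫ + muDir f' x y / 2 * ‖y - x‖ ^ 2 ≤ f y := by
  by_cases hxy : x = y
  · subst hxy; simp [muDir]
  · have hc : ∀ t : ℝ, HasDerivAt (fun t : ℝ => x + t • (y - x)) (y - x) t := by
      intro t
      simpa using ((hasDerivAt_id t).smul_const (y - x)).const_add x
    have hderiv : ∀ t : ℝ, HasDerivAt (fun t : ℝ => f (x + t • (y - x)))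
        ⟪f' (x + t • (y - x)), y - x⟫ t := by
      intro t
      have := ((hgrad (x + t • (y - x))).hasFDerivAt).comp_hasDerivAt t (hc t)
      simp at this
      exact this
    have hψmono : Monotone (fun t : ℝ => ⟪f' (x + t • (y - x)), y - x⟫) := by
      intro s t hst
      rcases eq_or_lt_of_le hst with rfl | hlt
      · exact le_rfl
      · have h := grad_mono f f' hconv hgrad (x + t • (y - x)) (x + s • (y - x))
        have e : (x + t • (y - x)) - (x + s • (y - x)) = (t - s) • (y - x) := by
          rw [sub_smul]; abel
        rw [e, real_inner_smul_right, inner_sub_left] at h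
        nlinarith [h, sub_pos.mpr hlt]
    have hint : IntervalIntegrable (fun t : ℝ => ⟪f' (x + t • (y - x)), y - x⟫)
        MeasureTheory.volume 0 1 := hψmono.intervalIntegrable
    have hFTC := intervalIntegral.integral_eq_sub_of_hasDerivAt
      (fun t (_ : t ∈ Set.uIcc (0:ℝ) 1) => hderiv t) hint
    have hnorm : 0 < ‖y - x‖ := by
      rw [norm_pos_iff, sub_ne_zero]; exact fun h => hxy h.symm
    have hlow : ∀ t ∈ Set.Icc (0:ℝ) 1,
        ⟪f' x, y - x⟫ + muDir f' x y * ‖y - x‖ ^ 2 * t ≤ ⟪f' (x + t • (y - x)), y - x⟫ := by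
      intro t ht
      rcases eq_or_lt_of_le ht.1 with rfl | htpos
      · simp
      · have hle := muDir_le f f' hconv hgrad x y hxy t ⟨htpos, ht.2⟩
        have hden : (0:ℝ) < t * ‖y - x‖ ^ 2 := by positivity
        rw [le_div_iff₀ hden, inner_sub_left] at hle
        nlinarith [hle]
    have hint1 : IntervalIntegrable
        (fun t : ℝ => ⟪f' x, y - x⟫ + muDir f' x y * ‖y - x‖ ^ 2 * t)
        MeasureTheory.volume 0 1 :=
      ((continuous_const.add (continuous_const.mul continuous_id)).intervalIntegrable 0 1)
    have hmono := intervalIntegral.integral_mono_on (by norm_num : (0:ℝ) ≤ 1) hint1 hint hlow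
    have hval : ∫ t in (0:ℝ)..1, (⟪f' x, y - x⟫ + muDir f' x y * ‖y - x‖ ^ 2 * t)
        = ⟪f' x, y - x⟫ + muDir f' x y * ‖y - x‖ ^ 2 / 2 := by
      rw [intervalIntegral.integral_add (continuous_const.intervalIntegrable 0 1)
        (Continuous.intervalIntegrable (by continuity) 0 1),
        intervalIntegral.integral_const_mul]
      simp [integral_id]
      ring
    rw [hval, hFTC] at hmono
    simp only [one_smul, add_sub_cancel, zero_smul, add_zero] at hmono
    linarith

theorem grad_eq_zero_of_min (f : E → ℝ) (f' : E → E)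
    (hgrad : ∀ z, HasGradientAt f (f' z) z) (z : E) (hz : ∀ w, f z ≤ f w) : f' z = 0 := by
  have hloc : IsLocalMin f z := Filter.Eventually.of_forall (fun w => hz w)
  have h0 := hloc.hasFDerivAt_eq_zero (hgrad z).hasFDerivAt
  have := (InnerProductSpace.toDual ℝ (EuclideanSpace ℝ (Fin d))).injective
    (h0.trans (map_zero (InnerProductSpace.toDual ℝ (EuclideanSpace ℝ (Fin d)))).symm)
  exact this

theorem muDir_eq_zero (f : E → ℝ) (f' : E → E) (hconv : ConvexOn ℝ Set.univ f)
    (hgrad : ∀ z, HasGradientAt f (f' z) z) (x y : E)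
    (hx' : f' x = 0) (hy' : f' y = 0) : muDir f' x y = 0 := by
  by_cases hxy : x = y
  · simp [muDir, hxy]
  · refine le_antisymm ?_ (muDir_nonneg f f' hconv hgrad x y)
    have h := muDir_le f f' hconv hgrad x y hxy 1 ⟨one_pos, le_refl 1⟩
    simpa [hx', hy'] using h

/-- **Good-step / bad-step suboptimality bound for GD** (Proposition: sc-split-analysis).
For convex differentiable `f` with minimizer `x*`, directional smoothness function `M`, and GD
iterates `x_{i+1} = x_i - η_i ∇f(x_i)`, with `λ_i = η_i M_i - 2`,
`𝒢 = {i < k : η_i < 2/M_i}` and `ℬ` its complement in `{0,…,k-1}`: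
`δ_k ≤ [∏_{i ∈ 𝒢} (1 + η_i λ_i μ_i)] δ_0
      + Σ_{i ∈ ℬ} [∏_{j ∈ 𝒢, j > i} (1 + η_j λ_j μ_j)] (η_i λ_i / 2) ‖∇f(x_i)‖²`. -/
theorem gd_split_suboptimality_bound {d : ℕ}
    (f : EuclideanSpace ℝ (Fin d) → ℝ)
    (f' : EuclideanSpace ℝ (Fin d) → EuclideanSpace ℝ (Fin d))
    (hconv : ConvexOn ℝ Set.univ f)
    (hgrad : ∀ z, HasGradientAt f (f' z) z)
    (xstar : EuclideanSpace ℝ (Fin d)) (hstar : ∀ z, f xstar ≤ f z)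
    (M : EuclideanSpace ℝ (Fin d) → EuclideanSpace ℝ (Fin d) → ℝ)
    (hMnonneg : ∀ u v, 0 ≤ M u v)
    (hM : ∀ u v, f v ≤ f u + ⟪f' u, v - u⟫ + M u v / 2 * ‖v - u‖ ^ 2)
    (x : ℕ → EuclideanSpace ℝ (Fin d)) (η : ℕ → ℝ) (hηpos : ∀ i, 0 < η i)
    (hstep : ∀ i, x (i + 1) = x i - η i • f' (x i))
    (k : ℕ) :
    f (x k) - f xstar ≤
      (∏ i ∈ (Finset.range k).filter (fun i => η i < 2 / M (x i) (x (i + 1))),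
          (1 + η i * (η i * M (x i) (x (i + 1)) - 2) * muDir f' (x i) xstar)) *
        (f (x 0) - f xstar)
      + ∑ i ∈ (Finset.range k).filter (fun i => ¬ η i < 2 / M (x i) (x (i + 1))),
          (∏ j ∈ ((Finset.range k).filter
                (fun j => η j < 2 / M (x j) (x (j + 1)))).filter (fun j => i < j),
              (1 + η j * (η j * M (x j) (x (j + 1)) - 2) * muDir f' (x j) xstar)) *
            (η i * (η i * M (x i) (x (i + 1)) - 2) / 2 * ‖f' (x i)‖ ^ 2) := by
  have hδ : ∀ i, 0 ≤ f (x i) - f xstar := fun i => by linarith [hstar (x i)]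
  have hdescent : ∀ i, f (x (i + 1)) ≤
      f (x i) + η i * (η i * M (x i) (x (i + 1)) - 2) / 2 * ‖f' (x i)‖ ^ 2 := by
    intro i
    have h := hM (x i) (x (i + 1))
    have hx : x (i + 1) - x i = -(η i • f' (x i)) := by rw [hstep i]; abel
    rw [hx, inner_neg_right, real_inner_smul_right, real_inner_self_eq_norm_sq,
      norm_neg, norm_smul, Real.norm_eq_abs, abs_of_pos (hηpos i)] at h
    ring_nf at h ⊢
    linarith
  have hgradlb : ∀ i, 2 * muDir f' (x i) xstar * (f (x i) - f xstar) ≤ ‖f' (x i)‖ ^ 2 := by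
    intro i
    have hkey := muDir_lower f f' hconv hgrad (x i) xstar
    have hμ := muDir_nonneg f f' hconv hgrad (x i) xstar
    have hinner : -⟪f' (x i), xstar - x i⟫ ≤ ‖f' (x i)‖ * ‖xstar - x i‖ := by
      have h1 := abs_real_inner_le_norm (f' (x i)) (xstar - x i)
      linarith [neg_abs_le ⟪f' (x i), xstar - x i⟫]
    have h1 : f (x i) - f xstar ≤ ‖f' (x i)‖ * ‖xstar - x i‖
        - muDir f' (x i) xstar / 2 * ‖xstar - x i‖ ^ 2 := by linarith [hstar (x i)]
    nlinarith [mul_le_mul_of_nonneg_left h1 hμ,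
      sq_nonneg (‖f' (x i)‖ - muDir f' (x i) xstar * ‖xstar - x i‖)]
  have hgoodstep : ∀ i, η i < 2 / M (x i) (x (i + 1)) →
      f (x (i + 1)) - f xstar ≤
        (1 + η i * (η i * M (x i) (x (i + 1)) - 2) * muDir f' (x i) xstar) *
          (f (x i) - f xstar) ∧
      0 ≤ 1 + η i * (η i * M (x i) (x (i + 1)) - 2) * muDir f' (x i) xstar := by
    intro i hg
    have hMpos : 0 < M (x i) (x (i + 1)) := by
      rcases (hMnonneg (x i) (x (i + 1))).lt_or_eq with h | h
      · exact h
      · exfalso; rw [← h, div_zero] at hg; linarith [hηpos i]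
    have hlneg : η i * M (x i) (x (i + 1)) - 2 < 0 := by
      have := (lt_div_iff₀ hMpos).mp hg; linarith
    have hμ := muDir_nonneg f f' hconv hgrad (x i) xstar
    have hd := hdescent i
    have hglb := hgradlb i
    rcases (hδ i).lt_or_eq with hpos | heq
    · have hetalam : η i * (η i * M (x i) (x (i + 1)) - 2) < 0 :=
        mul_neg_of_pos_of_neg (hηpos i) hlneg
      have key : η i * (η i * M (x i) (x (i + 1)) - 2) / 2 * ‖f' (x i)‖ ^ 2 ≤
          η i * (η i * M (x i) (x (i + 1)) - 2) / 2 *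
            (2 * muDir f' (x i) xstar * (f (x i) - f xstar)) :=
        mul_le_mul_of_nonpos_left hglb (by linarith)
      have hle : f (x (i + 1)) - f xstar ≤
          (1 + η i * (η i * M (x i) (x (i + 1)) - 2) * muDir f' (x i) xstar) *
            (f (x i) - f xstar) := by nlinarith [hd, key]
      exact ⟨hle, by nlinarith [hle, hδ (i + 1), hpos]⟩
    · have hmin : ∀ w, f (x i) ≤ f w := fun w => by linarith [hstar w]
      have hgz : f' (x i) = 0 := grad_eq_zero_of_min f f' hgrad (x i) hmin
      have hsz : f' xstar = 0 := grad_eq_zero_of_min f f' hgrad xstar hstar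
      have hμ0 : muDir f' (x i) xstar = 0 := muDir_eq_zero f f' hconv hgrad _ _ hgz hsz
      rw [hgz] at hd
      simp only [norm_zero] at hd
      constructor
      · rw [hμ0]; norm_num at hd ⊢; linarith
      · rw [hμ0]; norm_num
  induction k with
  | zero => simp
  | succ k ih =>
    rw [Finset.range_add_one, Finset.filter_insert, Finset.filter_insert]
    by_cases hg : η k < 2 / M (x k) (x (k + 1))
    · rw [if_pos hg, if_neg (not_not_intro hg),
        Finset.prod_insert (by simp :
          k ∉ (Finset.range k).filter (fun i => η i < 2 / M (x i) (x (i + 1))))]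
      have hsum : ∑ i ∈ (Finset.range k).filter (fun i => ¬ η i < 2 / M (x i) (x (i + 1))),
          (∏ j ∈ (insert k ((Finset.range k).filter
                (fun j => η j < 2 / M (x j) (x (j + 1))))).filter (fun j => i < j),
              (1 + η j * (η j * M (x j) (x (j + 1)) - 2) * muDir f' (x j) xstar)) *
            (η i * (η i * M (x i) (x (i + 1)) - 2) / 2 * ‖f' (x i)‖ ^ 2)
          = (1 + η k * (η k * M (x k) (x (k + 1)) - 2) * muDir f' (x k) xstar) *
            ∑ i ∈ (Finset.range k).filter (fun i => ¬ η i < 2 / M (x i) (x (i + 1))),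
          (∏ j ∈ (((Finset.range k).filter
                (fun j => η j < 2 / M (x j) (x (j + 1))))).filter (fun j => i < j),
              (1 + η j * (η j * M (x j) (x (j + 1)) - 2) * muDir f' (x j) xstar)) *
            (η i * (η i * M (x i) (x (i + 1)) - 2) / 2 * ‖f' (x i)‖ ^ 2) := by
        rw [Finset.mul_sum]
        refine Finset.sum_congr rfl fun i hi => ?_
        have hik : i < k := Finset.mem_range.mp (Finset.mem_filter.mp hi).1
        rw [Finset.filter_insert, if_pos hik, Finset.prod_insert (by simp)]
        ring
      rw [hsum]
      obtain ⟨hle, hc⟩ := hgoodstep k hg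
      calc f (x (k + 1)) - f xstar
          ≤ (1 + η k * (η k * M (x k) (x (k + 1)) - 2) * muDir f' (x k) xstar) *
              (f (x k) - f xstar) := hle
        _ ≤ (1 + η k * (η k * M (x k) (x (k + 1)) - 2) * muDir f' (x k) xstar) *
              ((∏ i ∈ (Finset.range k).filter (fun i => η i < 2 / M (x i) (x (i + 1))),
                  (1 + η i * (η i * M (x i) (x (i + 1)) - 2) * muDir f' (x i) xstar)) *
                (f (x 0) - f xstar)
              + ∑ i ∈ (Finset.range k).filter (fun i => ¬ η i < 2 / M (x i) (x (i + 1))),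
                  (∏ j ∈ ((Finset.range k).filter
                        (fun j => η j < 2 / M (x j) (x (j + 1)))).filter (fun j => i < j),
                      (1 + η j * (η j * M (x j) (x (j + 1)) - 2) * muDir f' (x j) xstar)) *
                    (η i * (η i * M (x i) (x (i + 1)) - 2) / 2 * ‖f' (x i)‖ ^ 2)) :=
            mul_le_mul_of_nonneg_left ih hc
        _ = _ := by ring
    · rw [if_neg hg, if_pos hg,
        Finset.sum_insert (by simp :
          k ∉ (Finset.range k).filter (fun i => ¬ η i < 2 / M (x i) (x (i + 1))))]
      have hempty : ((Finset.range k).filter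
            (fun j => η j < 2 / M (x j) (x (j + 1)))).filter (fun j => k < j) = ∅ := by
        refine Finset.filter_false_of_mem fun j hj => ?_
        have := Finset.mem_range.mp (Finset.mem_filter.mp hj).1
        omega
      rw [hempty, Finset.prod_empty, one_mul]
      have hd := hdescent k
      linarith [ih]
end

section
/- Let f : ℝ^d → ℝ be convex and differentiable with minimizer x*, let M be a directional smoothness function for f, and let x_{i+1} = x_i − η_i ∇f(x_i) be GD iterates with step-sizes η_i > 0. Let x̄_k = (Σ_{i=0}^{k} η_i x_{i+1}) / (Σ_{i=0}^{k} η_i). Then f(x̄_k) − f(x*) ≤ [‖x_0 − x*‖² + Σ_{i=0}^{k} η_i²·(η_i M(x_i,x_{i+1}) − 1)·‖∇f(x_i)‖²] / (2·Σ_{i=0}^{k} η_i). -/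
open scoped RealInnerProductSpace

/-- First-order condition for convex differentiable functions:
the function lies above its tangent plane. -/
lemma convex_grad_ineq {d : ℕ} (f : EuclideanSpace ℝ (Fin d) → ℝ)
    (hconv : ConvexOn ℝ Set.univ f)
    (u g : EuclideanSpace ℝ (Fin d)) (hg : HasGradientAt f g u)
    (y : EuclideanSpace ℝ (Fin d)) :
    f u + ⟪g, y - u⟫ ≤ f y := by
  rcases eq_or_ne y u with rfl | hne
  · simp
  -- restrict to the line through u and y
  set L : ℝ →ᵃ[ℝ] EuclideanSpace ℝ (Fin d) := AffineMap.lineMap u y with hL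
  have hφconv : ConvexOn ℝ Set.univ (f ∘ L) := by
    have := hconv.comp_affineMap L
    simpa using this
  have hLapp : ∀ t : ℝ, L t = u + t • (y - u) := by
    intro t
    simp only [hL, AffineMap.lineMap_apply_module]
    module
  have hderiv : HasDerivAt (f ∘ L) ⟪g, y - u⟫ 0 := by
    have hgF : HasFDerivAt f ((InnerProductSpace.toDual ℝ _) g) u := hg
    have hLd : HasDerivAt (fun t : ℝ => L t) (y - u) 0 := by
      have : HasDerivAt (fun t : ℝ => u + t • (y - u)) (y - u) 0 := by
        simpa using ((hasDerivAt_id (0:ℝ)).smul_const (y - u)).const_add u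
      refine this.congr_of_eventuallyEq ?_
      filter_upwards with t using (hLapp t)
    have h0 : L 0 = u := by simp [hLapp]
    rw [← h0] at hgF
    have := hgF.comp_hasDerivAt (0:ℝ) hLd
    simpa [InnerProductSpace.toDual_apply_apply] using this
  have hslope : ⟪g, y - u⟫ ≤ slope (f ∘ L) 0 1 :=
    hφconv.le_slope_of_hasDerivAt (Set.mem_univ 0) (Set.mem_univ 1) one_pos hderiv
  have h0 : (f ∘ L) 0 = f u := by simp [hLapp]
  have h1 : (f ∘ L) 1 = f y := by simp [hLapp]
  rw [slope_def_field, h0, h1] at hslope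
  rw [sub_zero, div_one] at hslope
  linarith

/-- **Averaged-iterate suboptimality bound for GD with any step-sizes**
(Proposition: convex-any-stepsize).
For convex differentiable `f` with minimizer `x*`, directional smoothness function `M`, and GD
iterates `x_{i+1} = x_i - η_i ∇f(x_i)` with `η_i > 0`, the weighted average
`x̄_k = (Σ_{i=0}^k η_i x_{i+1}) / (Σ_{i=0}^k η_i)` satisfies
`f(x̄_k) - f(x*) ≤ [‖x_0 - x*‖² + Σ_{i=0}^k η_i² (η_i M_i - 1) ‖∇f(x_i)‖²] / (2 Σ_{i=0}^k η_i)`. -/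
theorem gd_convex_any_stepsize {d : ℕ}
    (f : EuclideanSpace ℝ (Fin d) → ℝ)
    (f' : EuclideanSpace ℝ (Fin d) → EuclideanSpace ℝ (Fin d))
    (hconv : ConvexOn ℝ Set.univ f)
    (hgrad : ∀ z, HasGradientAt f (f' z) z)
    (xstar : EuclideanSpace ℝ (Fin d)) (hstar : ∀ z, f xstar ≤ f z)
    (M : EuclideanSpace ℝ (Fin d) → EuclideanSpace ℝ (Fin d) → ℝ)
    (hMnonneg : ∀ u v, 0 ≤ M u v)
    (hM : ∀ u v, f v ≤ f u + ⟪f' u, v - u⟫ + M u v / 2 * ‖v - u‖ ^ 2)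
    (x : ℕ → EuclideanSpace ℝ (Fin d)) (η : ℕ → ℝ) (hηpos : ∀ i, 0 < η i)
    (hstep : ∀ i, x (i + 1) = x i - η i • f' (x i))
    (k : ℕ) :
    f ((∑ i ∈ Finset.range (k + 1), η i)⁻¹ •
        ∑ i ∈ Finset.range (k + 1), η i • x (i + 1)) - f xstar ≤
      (‖x 0 - xstar‖ ^ 2 +
        ∑ i ∈ Finset.range (k + 1),
          η i ^ 2 * (η i * M (x i) (x (i + 1)) - 1) * ‖f' (x i)‖ ^ 2) /
        (2 * ∑ i ∈ Finset.range (k + 1), η i) := by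
  set D : ℕ → ℝ := fun i => ‖x i - xstar‖ ^ 2 with hD
  set S : ℝ := ∑ i ∈ Finset.range (k + 1), η i with hS
  have hSpos : 0 < S := Finset.sum_pos (fun i _ => hηpos i) ⟨0, by simp⟩
  -- per-step inequality
  have step : ∀ i, 2 * η i * (f (x (i + 1)) - f xstar) ≤
      (D i - D (i + 1)) + η i ^ 2 * (η i * M (x i) (x (i + 1)) - 1) * ‖f' (x i)‖ ^ 2 := by
    intro i
    set g := f' (x i) with hg
    have hdiff : x (i + 1) - x i = -(η i • g) := by rw [hstep i]; abel
    have hA := hM (x i) (x (i + 1))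
    rw [hdiff] at hA
    have hinner : ⟪g, -(η i • g)⟫ = -(η i * ‖g‖ ^ 2) := by
      rw [inner_neg_right, real_inner_smul_right, real_inner_self_eq_norm_sq]
    have hnorm : ‖-(η i • g)‖ ^ 2 = η i ^ 2 * ‖g‖ ^ 2 := by
      rw [norm_neg, norm_smul]
      simp [mul_pow, abs_of_pos (hηpos i), Real.norm_eq_abs]
    rw [hinner, hnorm] at hA
    have hB : f (x i) ≤ f xstar + ⟪g, x i - xstar⟫ := by
      have := convex_grad_ineq f hconv (x i) g (hgrad (x i)) xstar
      have hsym : ⟪g, xstar - x i⟫ = -⟪g, x i - xstar⟫ := by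
        rw [← inner_neg_right]; congr 1; abel
      linarith [this, hsym ▸ this]
    have hC : D (i + 1) = D i - 2 * η i * ⟪g, x i - xstar⟫ + η i ^ 2 * ‖g‖ ^ 2 := by
      have hx1 : x (i + 1) - xstar = (x i - xstar) - η i • g := by rw [hstep i]; abel
      rw [hD]
      simp only
      rw [hx1, norm_sub_sq_real, real_inner_smul_right, norm_smul]
      have hsym : ⟪x i - xstar, g⟫ = ⟪g, x i - xstar⟫ := real_inner_comm _ _
      rw [hsym]
      simp [mul_pow, abs_of_pos (hηpos i), Real.norm_eq_abs]
      ring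
    have hη := hηpos i
    nlinarith [hA, hB, hC, sq_nonneg (η i), sq_nonneg ‖g‖]
  -- sum and telescope
  have hsum : 2 * ((∑ i ∈ Finset.range (k + 1), η i * f (x (i + 1))) - S * f xstar) ≤
      D 0 + ∑ i ∈ Finset.range (k + 1),
        η i ^ 2 * (η i * M (x i) (x (i + 1)) - 1) * ‖f' (x i)‖ ^ 2 := by
    have htel : ∑ i ∈ Finset.range (k + 1), (D i - D (i + 1)) = D 0 - D (k + 1) := by
      have := Finset.sum_range_sub' D (k + 1)
      simpa using this
    have hsum1 : ∑ i ∈ Finset.range (k + 1), 2 * η i * (f (x (i + 1)) - f xstar) ≤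
        ∑ i ∈ Finset.range (k + 1), ((D i - D (i + 1)) +
          η i ^ 2 * (η i * M (x i) (x (i + 1)) - 1) * ‖f' (x i)‖ ^ 2) :=
      Finset.sum_le_sum fun i _ => step i
    rw [Finset.sum_add_distrib, htel] at hsum1
    have hDnn : 0 ≤ D (k + 1) := by positivity
    have hlhs : ∑ i ∈ Finset.range (k + 1), 2 * η i * (f (x (i + 1)) - f xstar) =
        2 * ((∑ i ∈ Finset.range (k + 1), η i * f (x (i + 1))) - S * f xstar) := by
      rw [hS, Finset.sum_mul, mul_sub, Finset.mul_sum, Finset.mul_sum,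
        ← Finset.sum_sub_distrib]
      exact Finset.sum_congr rfl fun i _ => by ring
    rw [hlhs] at hsum1
    linarith
  -- Jensen
  have hjensen : f (S⁻¹ • ∑ i ∈ Finset.range (k + 1), η i • x (i + 1)) ≤
      S⁻¹ * ∑ i ∈ Finset.range (k + 1), η i * f (x (i + 1)) := by
    have := hconv.map_centerMass_le (t := Finset.range (k + 1)) (w := η)
      (p := fun i => x (i + 1)) (fun i _ => (hηpos i).le) (hS ▸ hSpos)
      (fun i _ => Set.mem_univ _)
    simpa [Finset.centerMass, hS, Finset.mul_sum, smul_eq_mul, Function.comp] using this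
  have key : (∑ i ∈ Finset.range (k + 1), η i * f (x (i + 1))) - S * f xstar ≤
      (D 0 + ∑ i ∈ Finset.range (k + 1),
        η i ^ 2 * (η i * M (x i) (x (i + 1)) - 1) * ‖f' (x i)‖ ^ 2) / 2 := by
    linarith
  have hD0 : D 0 = ‖x 0 - xstar‖ ^ 2 := rfl
  set B : ℝ := ‖x 0 - xstar‖ ^ 2 + ∑ i ∈ Finset.range (k + 1),
      η i ^ 2 * (η i * M (x i) (x (i + 1)) - 1) * ‖f' (x i)‖ ^ 2 with hB
  have h2 : S⁻¹ * (∑ i ∈ Finset.range (k + 1), η i * f (x (i + 1))) - f xstar ≤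
      B / (2 * S) := by
    rw [sub_le_iff_le_add, inv_mul_le_iff₀ hSpos]
    have hSne : S ≠ 0 := hSpos.ne'
    have heq : S * (B / (2 * S) + f xstar) = B / 2 + S * f xstar := by
      field_simp
    rw [heq]
    rw [hB]
    rw [← hD0]
    linarith [key]
  linarith [hjensen, h2]
end

section
/- Let μ ≥ 0 and let η_k > 0 be a sequence with η_min > 0 a lower bound of η_0,…,η_k. Let γ_0 > 0 and define sequences by: α_k ∈ (0,1] solves α_k² = η_k (1 − α_k) γ_k + η_k α_k μ; γ_{k+1} = (1 − α_k) γ_k + α_k μ; λ_0 = 1 and λ_{k+1} = (1 − α_k) λ_k. Then: (i) if μ > 0 and γ_0 = μ, then λ_k = ∏_{i=0}^{k−1} (1 − √(η_i μ)); (ii) if γ_0 ∈ (μ, μ + 3/η_min), then λ_k ≤ 4/(η_min (γ_0 − μ)(k+1)²). -/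
set_option maxHeartbeats 1000000 in
/-- **Convergence of the estimating-sequence weights** (Lemma: lambda-convergence).
Let `μ ≥ 0`, let `η_i > 0` with `η_min > 0` a lower bound of `η_0, …, η_k`, let `γ_0 > 0`, and
let `α_i ∈ (0,1]` solve `α_i² = η_i (1 - α_i) γ_i + η_i α_i μ`, with
`γ_{i+1} = (1 - α_i) γ_i + α_i μ`, `λ_0 = 1`, `λ_{i+1} = (1 - α_i) λ_i`. Then:
(i) if `μ > 0` and `γ_0 = μ`, then `λ_k = ∏_{i=0}^{k-1} (1 - √(η_i μ))`;
(ii) if `γ_0 ∈ (μ, μ + 3/η_min)`, then `λ_k ≤ 4/(η_min (γ_0 - μ)(k+1)²)`. -/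
theorem estimating_sequence_lambda_convergence
    (μ : ℝ) (hμ : 0 ≤ μ)
    (η α γ lam : ℕ → ℝ) (k : ℕ)
    (ηmin : ℝ) (hηminpos : 0 < ηmin) (hηmin : ∀ i ≤ k, ηmin ≤ η i)
    (hηpos : ∀ i, 0 < η i) (hγ₀pos : 0 < γ 0)
    (hαmem : ∀ i, α i ∈ Set.Ioc (0:ℝ) 1)
    (hα : ∀ i, α i ^ 2 = η i * (1 - α i) * γ i + η i * α i * μ)
    (hγ : ∀ i, γ (i + 1) = (1 - α i) * γ i + α i * μ)
    (hlam0 : lam 0 = 1) (hlam : ∀ i, lam (i + 1) = (1 - α i) * lam i) :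
    (0 < μ → γ 0 = μ → lam k = ∏ i ∈ Finset.range k, (1 - Real.sqrt (η i * μ))) ∧
    (γ 0 ∈ Set.Ioo μ (μ + 3 / ηmin) → lam k ≤ 4 / (ηmin * (γ 0 - μ) * (k + 1) ^ 2)) := by
  -- basic facts used in both parts
  have hlamnn : ∀ i, 0 ≤ lam i := by
    intro i
    induction i with
    | zero => rw [hlam0]; norm_num
    | succ n ih =>
      rw [hlam n]
      exact mul_nonneg (by linarith [(hαmem n).2]) ih
  constructor
  · intro hμpos hγ0
    have hγall : ∀ i, γ i = μ := by
      intro i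
      induction i with
      | zero => exact hγ0
      | succ n ih => rw [hγ n, ih]; ring
    have hαval : ∀ i, α i = Real.sqrt (η i * μ) := by
      intro i
      have h := hα i
      rw [hγall i] at h
      have h2 : α i ^ 2 = η i * μ := by rw [h]; ring
      rw [← h2, Real.sqrt_sq (hαmem i).1.le]
    clear hηmin
    induction k with
    | zero => simpa using hlam0
    | succ n ih =>
      rw [hlam n, ih, Finset.prod_range_succ, hαval n]; ring
  · rintro ⟨hlt, hub⟩
    have hcpos : 0 < ηmin * (γ 0 - μ) := mul_pos hηminpos (by linarith)
    have hclt : ηmin * (γ 0 - μ) < 3 := by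
      have h1 : γ 0 - μ < 3 / ηmin := by linarith
      calc ηmin * (γ 0 - μ) < ηmin * (3 / ηmin) :=
            mul_lt_mul_of_pos_left h1 hηminpos
        _ = 3 := by field_simp
    have hdenpos : (0:ℝ) < ηmin * (γ 0 - μ) * (k + 1) ^ 2 := by
      apply mul_pos hcpos
      positivity
    -- γ i - μ = lam i * (γ 0 - μ)
    have hγlam : ∀ i, γ i - μ = lam i * (γ 0 - μ) := by
      intro i
      induction i with
      | zero => rw [hlam0]; ring
      | succ n ih =>
        rw [hγ n, hlam n]
        linear_combination (1 - α n) * ih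
    by_cases hlk : 0 < lam k
    · -- all lam i positive up to k
      have hlpos : ∀ i, i ≤ k → 0 < lam i := by
        intro i hi
        by_contra h
        have hzero : lam i = 0 := le_antisymm (not_lt.mp h) (hlamnn i)
        have hprop : ∀ j, lam (i + j) = 0 := by
          intro j
          induction j with
          | zero => exact hzero
          | succ n ih => rw [← Nat.add_assoc, hlam (i + n), ih]; ring
        have := hprop (k - i)
        rw [Nat.add_sub_cancel' hi] at this
        exact hlk.ne' this
      set sc := Real.sqrt (ηmin * (γ 0 - μ)) with hscdef
      have hscpos : 0 < sc := Real.sqrt_pos.mpr hcpos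
      have hsc2 : sc ^ 2 = ηmin * (γ 0 - μ) := Real.sq_sqrt hcpos.le
      have hsclt : sc < 2 := by nlinarith [hscpos]
      -- key induction
      have key : ∀ i, i ≤ k → 1 + i * sc / 2 ≤ 1 / Real.sqrt (lam i) := by
        intro i
        induction i with
        | zero =>
          intro _
          rw [hlam0]
          simp
        | succ n ih =>
          intro h
          have hn := ih (by omega)
          have hln : 0 < lam n := hlpos n (by omega)
          have hln1 : 0 < lam (n + 1) := hlpos (n + 1) h
          set sa := Real.sqrt (lam n) with hsadef
          set sb := Real.sqrt (lam (n + 1)) with hsbdef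
          have hsa : 0 < sa := Real.sqrt_pos.mpr hln
          have hsb : 0 < sb := Real.sqrt_pos.mpr hln1
          have hsa2 : sa ^ 2 = lam n := Real.sq_sqrt hln.le
          have hsb2 : sb ^ 2 = lam (n + 1) := Real.sq_sqrt hln1.le
          have hαn := hαmem n
          -- α n ^ 2 = η n * γ (n+1)
          have hα2 : α n ^ 2 = η n * γ (n + 1) := by rw [hα n, hγ n]; ring
          -- γ (n+1) ≥ lam (n+1) * (γ 0 - μ) ≥ 0
          have hγn1 : lam (n + 1) * (γ 0 - μ) ≤ γ (n + 1) := by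
            have := hγlam (n + 1); linarith
          have hγn1nn : 0 ≤ lam (n + 1) * (γ 0 - μ) :=
            mul_nonneg hln1.le (by linarith)
          have hηn : ηmin ≤ η n := hηmin n (by omega)
          -- α n ^ 2 ≥ c * lam (n+1)
          have hα2ge : ηmin * (γ 0 - μ) * lam (n + 1) ≤ α n ^ 2 := by
            rw [hα2]
            nlinarith [hηpos n]
          -- α n ≥ sc * sb
          have hαge : sc * sb ≤ α n := by
            have h1 : Real.sqrt (ηmin * (γ 0 - μ) * lam (n + 1)) ≤
                Real.sqrt (α n ^ 2) := Real.sqrt_le_sqrt hα2ge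
            rw [Real.sqrt_sq hαn.1.le, Real.sqrt_mul hcpos.le] at h1
            exact h1
          -- b = (1 - α n) * a
          have hba : lam (n + 1) = (1 - α n) * lam n := hlam n
          have hsbsa : sb ≤ sa := by
            apply Real.sqrt_le_sqrt
            nlinarith [hαn.1, hln]
          -- 2 * (sa - sb) ≥ α n * sa
          have hstep : α n * sa ≤ 2 * (sa - sb) := by
            have hkey : α n * sa ^ 2 = sa ^ 2 - sb ^ 2 := by
              rw [hsa2, hsb2, hba]; ring
            have hx : sa * (2 * (sa - sb) - α n * sa) = (sa - sb) ^ 2 := by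
              linear_combination (-1 : ℝ) * hkey
            have h0 : sa * 0 ≤ sa * (2 * (sa - sb) - α n * sa) := by
              rw [mul_zero, hx]; exact sq_nonneg _
            have := le_of_mul_le_mul_left h0 hsa
            linarith
          -- 1/sb ≥ 1/sa + sc/2
          have hmain : 1 / sa + sc / 2 ≤ 1 / sb := by
            have hA : sa * (sc * sb) ≤ sa * α n :=
              mul_le_mul_of_nonneg_left hαge hsa.le
            rw [div_add_div _ _ (ne_of_gt hsa) (by norm_num),
              div_le_div_iff₀ (by positivity) hsb]
            -- (1 * 2 + sa * sc) * sb ≤ 1 * (sa * 2)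
            linarith [hA, hstep]
          have : 1 + (n : ℝ) * sc / 2 + sc / 2 ≤ 1 / sb := by
            calc 1 + (n : ℝ) * sc / 2 + sc / 2 ≤ 1 / sa + sc / 2 := by linarith
              _ ≤ 1 / sb := hmain
          push_cast
          linarith
      have hk := key k le_rfl
      set sk := Real.sqrt (lam k) with hskdef
      have hsk : 0 < sk := Real.sqrt_pos.mpr hlk
      have hsk2 : sk ^ 2 = lam k := Real.sq_sqrt hlk.le
      have h1 : ((k : ℝ) + 1) * sc / 2 ≤ 1 / sk := by
        have : ((k : ℝ) + 1) * sc / 2 ≤ 1 + (k : ℝ) * sc / 2 := by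
          have : sc / 2 ≤ 1 := by linarith
          have hk0 : (0:ℝ) ≤ (k : ℝ) := Nat.cast_nonneg k
          nlinarith [hk0, hscpos.le]
        linarith
      have h2 : ((k : ℝ) + 1) * sc / 2 * sk ≤ 1 := by
        calc ((k : ℝ) + 1) * sc / 2 * sk ≤ 1 / sk * sk :=
              mul_le_mul_of_nonneg_right h1 hsk.le
          _ = 1 := by field_simp
      have hXnn : (0:ℝ) ≤ ((k : ℝ) + 1) * sc / 2 * sk := by positivity
      have h3 : (((k : ℝ) + 1) * sc / 2 * sk) ^ 2 ≤ 1 := by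
        calc (((k : ℝ) + 1) * sc / 2 * sk) ^ 2
            ≤ 1 ^ 2 := by exact pow_le_pow_left₀ hXnn h2 2
          _ = 1 := one_pow 2
      have h4 : (((k : ℝ) + 1) * sc / 2 * sk) ^ 2
          = ηmin * (γ 0 - μ) * lam k * ((k : ℝ) + 1) ^ 2 / 4 := by
        linear_combination (((k : ℝ) + 1) ^ 2 * sc ^ 2 / 4) * hsk2
          + (((k : ℝ) + 1) ^ 2 * lam k / 4) * hsc2
      rw [h4] at h3
      rw [le_div_iff₀ hdenpos]
      linarith
    · have hzero : lam k = 0 := le_antisymm (not_lt.mp hlk) (hlamnn k)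
      rw [hzero]
      positivity
end

section
/- Let f : ℝ^d → ℝ be convex and differentiable with minimizer x*, and let M be a directional smoothness function for f with M(x_i, x_{i+1}) > 0 along the iterates. Run gradient descent with the Polyak step-size η_i = γ·(f(x_i) − f(x*))/‖∇f(x_i)‖² for some γ ∈ (1,2), assuming ∇f(x_i) ≠ 0 for i = 0,…,k−1. Let x̄_k = (Σ_{i=0}^{k−1} M(x_i,x_{i+1})^{-1} x_i) / (Σ_{i=0}^{k−1} M(x_i,x_{i+1})^{-1}). Then f(x̄_k) − f(x*) ≤ c(γ)·‖x_0 − x*‖² / (2·Σ_{i=0}^{k−1} M(x_i,x_{i+1})^{-1}), where c(γ) = γ/((2 − γ)(γ − 1)). -/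
open scoped RealInnerProductSpace

lemma grad_convex_le_aux {E : Type*} [NormedAddCommGroup E] [InnerProductSpace ℝ E]
    [CompleteSpace E]
    (f : E → ℝ) (hconv : ConvexOn ℝ Set.univ f) {x y g : E}
    (hg : HasGradientAt f g x) : f x + ⟪g, y - x⟫ ≤ f y := by
  set v := y - x with hv
  have hc : ∀ t : ℝ, HasDerivAt (fun t : ℝ => x + t • v) v t := by
    intro t
    simpa using ((hasDerivAt_id t).smul_const v).const_add x
  have hφconv : ConvexOn ℝ Set.univ (fun t : ℝ => f (x + t • v)) := by
    have h := hconv.comp_affineMap (AffineMap.lineMap x y)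
    have heq : (f ∘ ⇑(AffineMap.lineMap x y)) = fun t : ℝ => f (x + t • v) := by
      funext t
      simp only [Function.comp_apply, AffineMap.lineMap_apply, vsub_eq_sub, vadd_eq_add, hv]
      congr 1
      module
    rw [heq] at h
    simpa using h
  have hφd : HasDerivAt (fun t : ℝ => f (x + t • v)) ⟪g, v⟫ 0 := by
    have hF : HasFDerivAt f (InnerProductSpace.toDual ℝ E g) (x + (0:ℝ) • v) := by
      simpa using (hasGradientAt_iff_hasFDerivAt.mp hg : HasFDerivAt f (InnerProductSpace.toDual ℝ E g) x)
    have h := hF.comp_hasDerivAt (0:ℝ) (hc 0)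
    simpa [Function.comp_def] using h
  have hs := hφconv.le_slope_of_hasDerivAt (Set.mem_univ (0:ℝ)) (Set.mem_univ (1:ℝ))
    zero_lt_one hφd
  have hsl : slope (fun t : ℝ => f (x + t • v)) 0 1 = f y - f x := by
    simp [slope, hv]
  rw [hsl] at hs
  linarith

set_option maxHeartbeats 1000000 in
/-- **GD with the Polyak step-size adapts to any directional smoothness** (Theorem: polyak).
For convex differentiable `f` with minimizer `x*`, directional smoothness function `M` that is
positive along the iterates, and GD with Polyak step-sizes
`η_i = γ (f(x_i) - f(x*)) / ‖∇f(x_i)‖²`, `γ ∈ (1,2)`, the weighted average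
`x̄_k = (Σ_{i<k} M_i⁻¹ x_i)/(Σ_{i<k} M_i⁻¹)` satisfies
`f(x̄_k) - f(x*) ≤ c(γ) ‖x_0 - x*‖² / (2 Σ_{i<k} M_i⁻¹)` with
`c(γ) = γ/((2-γ)(γ-1))`. -/
theorem polyak_stepsize_directional_smoothness_rate {d : ℕ}
    (f : EuclideanSpace ℝ (Fin d) → ℝ)
    (f' : EuclideanSpace ℝ (Fin d) → EuclideanSpace ℝ (Fin d))
    (hconv : ConvexOn ℝ Set.univ f)
    (hgrad : ∀ z, HasGradientAt f (f' z) z)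
    (xstar : EuclideanSpace ℝ (Fin d)) (hstar : ∀ z, f xstar ≤ f z)
    (M : EuclideanSpace ℝ (Fin d) → EuclideanSpace ℝ (Fin d) → ℝ)
    (hMnonneg : ∀ u v, 0 ≤ M u v)
    (hM : ∀ u v, f v ≤ f u + ⟪f' u, v - u⟫ + M u v / 2 * ‖v - u‖ ^ 2)
    (γ : ℝ) (hγ : γ ∈ Set.Ioo (1:ℝ) 2)
    (x : ℕ → EuclideanSpace ℝ (Fin d)) (η : ℕ → ℝ)
    (hη : ∀ i, η i = γ * (f (x i) - f xstar) / ‖f' (x i)‖ ^ 2)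
    (hstep : ∀ i, x (i + 1) = x i - η i • f' (x i))
    (k : ℕ) (hk : 0 < k)
    (hgne : ∀ i < k, f' (x i) ≠ 0)
    (hMpos : ∀ i < k, 0 < M (x i) (x (i + 1))) :
    f ((∑ i ∈ Finset.range k, (M (x i) (x (i + 1)))⁻¹)⁻¹ •
        ∑ i ∈ Finset.range k, (M (x i) (x (i + 1)))⁻¹ • x i) - f xstar ≤
      γ / ((2 - γ) * (γ - 1)) * ‖x 0 - xstar‖ ^ 2 /
        (2 * ∑ i ∈ Finset.range k, (M (x i) (x (i + 1)))⁻¹) := by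
  obtain ⟨hγ1, hγ2⟩ := hγ
  have hγpos : (0:ℝ) < γ := by linarith
  set w : ℕ → ℝ := fun i => (M (x i) (x (i + 1)))⁻¹ with hw
  have hwdef : ∀ i, (M (x i) (x (i + 1)))⁻¹ = w i := fun i => rfl
  simp only [hwdef]
  set S := ∑ i ∈ Finset.range k, w i with hS
  have hwpos : ∀ i ∈ Finset.range k, 0 < w i := fun i hi =>
    inv_pos.2 (hMpos i (Finset.mem_range.1 hi))
  have hSpos : 0 < S :=
    Finset.sum_pos hwpos ⟨0, Finset.mem_range.2 hk⟩
  -- positivity of the gaps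
  have hΔpos : ∀ i < k, 0 < f (x i) - f xstar := by
    intro i hi
    rcases lt_or_eq_of_le (hstar (x i)) with h | h
    · linarith
    · exfalso
      apply hgne i hi
      have hmin : IsLocalMin f (x i) := by
        apply Filter.Eventually.of_forall
        intro z
        rw [← h]
        exact hstar z
      have hz := hmin.hasFDerivAt_eq_zero
        (hgrad (x i) : HasFDerivAt f (InnerProductSpace.toDual ℝ _ (f' (x i))) (x i))
      have h0 : (InnerProductSpace.toDual ℝ (EuclideanSpace ℝ (Fin d))) (f' (x i)) =
          (InnerProductSpace.toDual ℝ (EuclideanSpace ℝ (Fin d))) 0 := by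
        rw [map_zero]; exact hz
      exact (InnerProductSpace.toDual ℝ (EuclideanSpace ℝ (Fin d))).injective h0
  -- per-step decrease
  have key : ∀ i < k, 2 * (2 - γ) * (γ - 1) / γ * (w i * (f (x i) - f xstar)) ≤
      ‖x i - xstar‖ ^ 2 - ‖x (i + 1) - xstar‖ ^ 2 := by
    intro i hi
    set D := f (x i) - f xstar with hD'
    set G := ‖f' (x i)‖ ^ 2 with hG'
    set Mi := M (x i) (x (i + 1)) with hMi'
    set P := ⟪f' (x i), x i - xstar⟫ with hP'
    have hD : 0 < D := hΔpos i hi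
    have hG : 0 < G := by
      rw [hG']
      exact pow_pos (norm_pos_iff.2 (hgne i hi)) 2
    have hMi : 0 < Mi := hMpos i hi
    have hηd : η i = γ * D / G := hη i
    have hηpos : 0 < η i := by rw [hηd]; positivity
    have hq : η i * G = γ * D := by
      rw [hηd]; field_simp
    have hdiff : x (i + 1) - x i = -(η i • f' (x i)) := by
      rw [hstep i]; abel
    -- inner products
    have hiprw : ⟪f' (x i), x (i + 1) - x i⟫ = -(η i * G) := by
      rw [hdiff, inner_neg_right, real_inner_smul_right, real_inner_self_eq_norm_sq, hG']
    have hnormrw : ‖x (i + 1) - x i‖ ^ 2 = (η i) ^ 2 * G := by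
      rw [hdiff, norm_neg, norm_smul, mul_pow, Real.norm_eq_abs, sq_abs, hG']
    -- smoothness + optimality : 0 ≤ D - ηG + Mi/2 η²G
    have hsm := hM (x i) (x (i + 1))
    rw [hiprw, hnormrw] at hsm
    have hsmineq : 0 ≤ D - η i * G + Mi / 2 * ((η i) ^ 2 * G) := by
      have h1 := hstar (x (i + 1))
      rw [hD', hMi']
      linarith
    have e2 : (η i) ^ 2 * (G * G) = γ ^ 2 * D ^ 2 := by
      calc (η i) ^ 2 * (G * G) = (η i * G) ^ 2 := by ring
        _ = (γ * D) ^ 2 := by rw [hq]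
        _ = γ ^ 2 * D ^ 2 := by ring
    have hprod := mul_nonneg hG.le hsmineq
    have hprodeq : G * (D - η i * G + Mi / 2 * ((η i) ^ 2 * G)) =
        D * G - γ * D * G + Mi / 2 * (γ ^ 2 * D ^ 2) := by
      linear_combination (Mi / 2) * e2 - G * hq
    rw [hprodeq] at hprod
    have h2 : 2 * (γ - 1) * G ≤ Mi * γ ^ 2 * D := by
      by_contra hcon
      push_neg at hcon
      have := mul_lt_mul_of_pos_left hcon hD
      nlinarith [hprod]
    -- convexity inequality
    have hip : D ≤ P := by
      have hcx := grad_convex_le_aux f hconv (y := xstar) (hgrad (x i))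
      have hneg : ⟪f' (x i), xstar - x i⟫ = -P := by
        rw [show xstar - x i = -(x i - xstar) by abel, inner_neg_right, hP']
      rw [hneg] at hcx
      rw [hD', hP']
      rw [hP'] at hcx
      linarith
    -- expansion of the distance
    have hexp : ‖x (i + 1) - xstar‖ ^ 2 =
        ‖x i - xstar‖ ^ 2 - 2 * η i * P + (η i) ^ 2 * G := by
      rw [hstep i, show x i - η i • f' (x i) - xstar = (x i - xstar) - η i • f' (x i) by abel,
        norm_sub_sq_real, real_inner_smul_right, real_inner_comm, norm_smul, mul_pow,
        Real.norm_eq_abs, sq_abs, hG', hP']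
      ring
    -- descent
    have h1 : γ * (2 - γ) * D ^ 2 / G ≤ ‖x i - xstar‖ ^ 2 - ‖x (i + 1) - xstar‖ ^ 2 := by
      have t1 : 2 * (γ * D) * D ≤ 2 * (γ * D) * P := by
        have := mul_le_mul_of_nonneg_left hip (by positivity : (0:ℝ) ≤ 2 * (γ * D))
        linarith
      have e4 : η i * G * P = γ * D * P := by rw [hq]
      have h1' : γ * (2 - γ) * D ^ 2 ≤ (2 * η i * P - (η i) ^ 2 * G) * G := by
        nlinarith [t1, e2, e4]
      rw [hexp, div_le_iff₀ hG]
      have hre : ‖x i - xstar‖ ^ 2 - (‖x i - xstar‖ ^ 2 - 2 * η i * P + (η i) ^ 2 * G) =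
          2 * η i * P - (η i) ^ 2 * G := by ring
      rw [hre]
      exact h1'
    -- combine with h2
    have hfrac : 2 * (2 - γ) * (γ - 1) / γ * (w i * D) ≤ γ * (2 - γ) * D ^ 2 / G := by
      have hwMi : w i = Mi⁻¹ := rfl
      rw [hwMi]
      have key0 : 2 * (2 - γ) * (γ - 1) / γ * (Mi⁻¹ * D) =
          2 * (2 - γ) * (γ - 1) * D / (γ * Mi) := by
        field_simp
      rw [key0, div_le_div_iff₀ (by positivity) hG]
      nlinarith [mul_le_mul_of_nonneg_left h2
        (mul_nonneg (by linarith : (0:ℝ) ≤ 2 - γ) hD.le)]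
    linarith
  -- telescoping sum
  have htel : ∑ i ∈ Finset.range k, (‖x i - xstar‖ ^ 2 - ‖x (i + 1) - xstar‖ ^ 2) =
      ‖x 0 - xstar‖ ^ 2 - ‖x k - xstar‖ ^ 2 :=
    Finset.sum_range_sub' (fun i => ‖x i - xstar‖ ^ 2) k
  set A := ∑ i ∈ Finset.range k, w i * (f (x i) - f xstar) with hA'
  have hsumΔ : 2 * (2 - γ) * (γ - 1) / γ * A ≤ ‖x 0 - xstar‖ ^ 2 := by
    have h := Finset.sum_le_sum (fun i hi => key i (Finset.mem_range.1 hi))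
    rw [htel, ← Finset.mul_sum] at h
    have : (0:ℝ) ≤ ‖x k - xstar‖ ^ 2 := sq_nonneg _
    rw [hA']
    linarith
  -- Jensen
  have hjen := hconv.map_centerMass_le (t := Finset.range k) (w := w) (p := x)
    (fun i hi => (hwpos i hi).le) hSpos (fun i _ => Set.mem_univ _)
  have hcm : (Finset.range k).centerMass w x = S⁻¹ • ∑ i ∈ Finset.range k, w i • x i := by
    rw [Finset.centerMass, hS]
  have hcmf : (Finset.range k).centerMass w (f ∘ x) =
      S⁻¹ * ∑ i ∈ Finset.range k, w i * f (x i) := by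
    rw [Finset.centerMass, hS]
    simp [smul_eq_mul]
  rw [hcm, hcmf] at hjen
  -- algebra on the sums
  have hsplit : ∑ i ∈ Finset.range k, w i * f (x i) = A + S * f xstar := by
    rw [hA', hS, Finset.sum_mul, ← Finset.sum_add_distrib]
    exact Finset.sum_congr rfl fun i _ => by ring
  rw [hsplit] at hjen
  have hjen2 : f (S⁻¹ • ∑ i ∈ Finset.range k, w i • x i) - f xstar ≤ S⁻¹ * A := by
    have : S⁻¹ * (A + S * f xstar) = S⁻¹ * A + f xstar := by
      field_simp
    linarith [hjen, this.le, this.ge]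
  -- bound on A
  have hApos : A ≤ γ * ‖x 0 - xstar‖ ^ 2 / (2 * (2 - γ) * (γ - 1)) := by
    rw [le_div_iff₀ (by nlinarith)]
    have h := mul_le_mul_of_nonneg_left hsumΔ hγpos.le
    have e : γ * (2 * (2 - γ) * (γ - 1) / γ * A) = A * (2 * (2 - γ) * (γ - 1)) := by
      field_simp
    nlinarith [h, e]
  calc f (S⁻¹ • ∑ i ∈ Finset.range k, w i • x i) - f xstar ≤ S⁻¹ * A := hjen2
    _ ≤ S⁻¹ * (γ * ‖x 0 - xstar‖ ^ 2 / (2 * (2 - γ) * (γ - 1))) :=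
        mul_le_mul_of_nonneg_left hApos (inv_nonneg.2 hSpos.le)
    _ = γ / ((2 - γ) * (γ - 1)) * ‖x 0 - xstar‖ ^ 2 / (2 * S) := by
        have h2γ : (2:ℝ) - γ ≠ 0 := by linarith
        have hγ1' : γ - 1 ≠ 0 := by linarith
        have hSne : S ≠ 0 := ne_of_gt hSpos
        field_simp
end

section
/- Let f : ℝ^d → ℝ be differentiable with minimizer x*, let M be a directional smoothness function for f, and let γ ∈ (1,2). Let x ∈ ℝ^d with ∇f(x) ≠ 0, set η_x = γ·(f(x) − f(x*))/‖∇f(x)‖² and x̃ = x − η_x ∇f(x), and assume M(x, x̃) > 0. Then f(x) − f(x*) ≥ ((γ − 1)/γ²)·(2/M(x, x̃))·‖∇f(x)‖². -/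
open scoped RealInnerProductSpace

set_option maxHeartbeats 1000000 in
/-- **Lower bound on the optimality gap under a Polyak step** (Proposition: polyak).
For differentiable `f` with minimizer `x*`, directional smoothness function `M`, `γ ∈ (1,2)`,
`∇f(x) ≠ 0`, Polyak step-size `η_x = γ (f(x) - f(x*)) / ‖∇f(x)‖²` and
`x̃ = x - η_x ∇f(x)` with `M(x, x̃) > 0`:
`f(x) - f(x*) ≥ ((γ-1)/γ²) (2/M(x, x̃)) ‖∇f(x)‖²`. -/
theorem polyak_step_gap_lower_bound {d : ℕ}
    (f : EuclideanSpace ℝ (Fin d) → ℝ)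
    (f' : EuclideanSpace ℝ (Fin d) → EuclideanSpace ℝ (Fin d))
    (hgrad : ∀ z, HasGradientAt f (f' z) z)
    (xstar : EuclideanSpace ℝ (Fin d)) (hstar : ∀ z, f xstar ≤ f z)
    (M : EuclideanSpace ℝ (Fin d) → EuclideanSpace ℝ (Fin d) → ℝ)
    (hMnonneg : ∀ u v, 0 ≤ M u v)
    (hM : ∀ u v, f v ≤ f u + ⟪f' u, v - u⟫ + M u v / 2 * ‖v - u‖ ^ 2)
    (γ : ℝ) (hγ : γ ∈ Set.Ioo (1:ℝ) 2)
    (x : EuclideanSpace ℝ (Fin d)) (hne : f' x ≠ 0)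
    (ηx : ℝ) (hηx : ηx = γ * (f x - f xstar) / ‖f' x‖ ^ 2)
    (xt : EuclideanSpace ℝ (Fin d)) (hxt : xt = x - ηx • f' x)
    (hMpos : 0 < M x xt) :
    f x - f xstar ≥ (γ - 1) / γ ^ 2 * (2 / M x xt) * ‖f' x‖ ^ 2 := by
  obtain ⟨hγ1, hγ2⟩ := hγ
  have hg2 : (0:ℝ) < ‖f' x‖ ^ 2 := pow_pos (norm_pos_iff.mpr hne) 2
  have hΔ0 : 0 ≤ f x - f xstar := sub_nonneg.mpr (hstar x)
  have hΔ : 0 < f x - f xstar := by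
    rcases hΔ0.lt_or_eq with h | h
    · exact h
    · exfalso
      apply hne
      have hmin : IsLocalMin f x := by
        apply Filter.Eventually.of_forall
        intro z
        have := hstar z
        linarith
      have h0 := hmin.hasFDerivAt_eq_zero (hgrad x).hasFDerivAt
      have : (InnerProductSpace.toDual ℝ (EuclideanSpace ℝ (Fin d))) (f' x) = 0 := h0
      simpa using (InnerProductSpace.toDual ℝ (EuclideanSpace ℝ (Fin d))).map_eq_zero_iff.mp this
  have hkey := hM x xt
  have hsub : xt - x = -(ηx • f' x) := by rw [hxt]; abel
  have hip : ⟪f' x, xt - x⟫ = -(ηx * ‖f' x‖ ^ 2) := by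
    rw [hsub, inner_neg_right, real_inner_smul_right, real_inner_self_eq_norm_sq]
  have hnorm : ‖xt - x‖ ^ 2 = ηx ^ 2 * ‖f' x‖ ^ 2 := by
    rw [hsub, norm_neg, norm_smul, mul_pow]
    simp [sq_abs]
  rw [hip, hnorm] at hkey
  have hstart := hstar xt
  have hη : ηx * ‖f' x‖ ^ 2 = γ * (f x - f xstar) := by
    rw [hηx]; field_simp
  have hη2 : ηx ^ 2 * ‖f' x‖ ^ 2 = γ ^ 2 * (f x - f xstar) ^ 2 / ‖f' x‖ ^ 2 := by
    rw [hηx]; field_simp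
  rw [hη2] at hkey
  have hc : γ ^ 2 * (f x - f xstar) ^ 2 / ‖f' x‖ ^ 2 * ‖f' x‖ ^ 2
      = γ ^ 2 * (f x - f xstar) ^ 2 := div_mul_cancel₀ _ (ne_of_gt hg2)
  have h2 : (γ - 1) * (f x - f xstar) * (2 * ‖f' x‖ ^ 2)
      ≤ M x xt * (γ ^ 2 * (f x - f xstar) ^ 2) := by
    have hstep : (γ - 1) * (f x - f xstar)
        ≤ M x xt / 2 * (γ ^ 2 * (f x - f xstar) ^ 2 / ‖f' x‖ ^ 2) := by
      nlinarith [hkey, hstart, hη]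
    have := mul_le_mul_of_nonneg_right hstep hg2.le
    nlinarith [this, hc, hMpos.le]
  have hγm : 0 < γ ^ 2 * M x xt := mul_pos (pow_pos (by linarith) 2) hMpos
  have heq : (γ - 1) / γ ^ 2 * (2 / M x xt) * ‖f' x‖ ^ 2
      = (γ - 1) * 2 * ‖f' x‖ ^ 2 / (γ ^ 2 * M x xt) := by
    field_simp
  rw [ge_iff_le, heq, div_le_iff₀ hγm]
  nlinarith [h2, hΔ]
end

section
/- Let f : ℝ^d → ℝ be convex and differentiable with minimizer x*, and run gradient descent with Polyak step-sizes η_i = γ·(f(x_i) − f(x*))/‖∇f(x_i)‖² for some 0 < γ < 2, assuming ∇f(x_i) ≠ 0 for i = 0,…,k−1. Let x̄_k = (Σ_{i=0}^{k−1} η_i x_i) / (Σ_{i=0}^{k−1} η_i). Then f(x̄_k) − f(x*) ≤ ‖x_0 − x*‖² / ((2 − γ)·Σ_{i=0}^{k−1} η_i). -/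
open scoped RealInnerProductSpace

section Aux
variable {E : Type*} [NormedAddCommGroup E] [InnerProductSpace ℝ E] [CompleteSpace E]

lemma grad_first_order {f : E → ℝ} (hconv : ConvexOn ℝ Set.univ f)
    {g x : E} (hg : HasGradientAt f g x) (y : E) :
    f x + ⟪g, y - x⟫ ≤ f y := by
  set φ : ℝ → ℝ := f ∘ (AffineMap.lineMap x y : ℝ →ᵃ[ℝ] E) with hφdef
  have hφconv : ConvexOn ℝ Set.univ φ := by
    simpa using hconv.comp_affineMap (AffineMap.lineMap x y : ℝ →ᵃ[ℝ] E)
  have hc : HasDerivAt (fun t : ℝ => (AffineMap.lineMap x y : ℝ →ᵃ[ℝ] E) t) (y - x) 0 := by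
    simp only [AffineMap.lineMap_apply_module]
    have h1 : HasDerivAt (fun t : ℝ => 1 - t) (-1) 0 := by
      simpa using (hasDerivAt_id (0:ℝ)).const_sub 1
    have := (h1.smul_const x).add ((hasDerivAt_id (0:ℝ)).smul_const y)
    convert this using 1
    · funext t; simp
    · module
  have h0 : (AffineMap.lineMap x y : ℝ →ᵃ[ℝ] E) (0:ℝ) = x := by
    simp [AffineMap.lineMap_apply_module]
  have hfx : HasFDerivAt f (InnerProductSpace.toDual ℝ E g)
      ((AffineMap.lineMap x y : ℝ →ᵃ[ℝ] E) (0:ℝ)) := by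
    rw [h0]; exact hg.hasFDerivAt
  have hφ' : HasDerivAt φ ⟪g, y - x⟫ 0 := by
    have := hfx.comp_hasDerivAt 0 hc
    simpa [InnerProductSpace.toDual_apply_apply] using this
  have := hφconv.le_slope_of_hasDerivAt (Set.mem_univ 0) (Set.mem_univ 1) one_pos hφ'
  have hs : slope φ 0 1 = f y - f x := by
    simp [slope_def_field, hφdef, AffineMap.lineMap_apply_module]
  rw [hs] at this
  linarith

end Aux

/-- **Alternative guarantee for GD with the Polyak step-size** (Theorem: polyak-alternate).
For convex differentiable `f` with minimizer `x*` and GD with Polyak step-sizes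
`η_i = γ (f(x_i) - f(x*)) / ‖∇f(x_i)‖²`, `0 < γ < 2`, the weighted average
`x̄_k = (Σ_{i<k} η_i x_i)/(Σ_{i<k} η_i)` satisfies
`f(x̄_k) - f(x*) ≤ ‖x_0 - x*‖² / ((2 - γ) Σ_{i<k} η_i)`. -/
theorem polyak_stepsize_alternate_rate {d : ℕ}
    (f : EuclideanSpace ℝ (Fin d) → ℝ)
    (f' : EuclideanSpace ℝ (Fin d) → EuclideanSpace ℝ (Fin d))
    (hconv : ConvexOn ℝ Set.univ f)
    (hgrad : ∀ z, HasGradientAt f (f' z) z)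
    (xstar : EuclideanSpace ℝ (Fin d)) (hstar : ∀ z, f xstar ≤ f z)
    (γ : ℝ) (hγpos : 0 < γ) (hγlt : γ < 2)
    (x : ℕ → EuclideanSpace ℝ (Fin d)) (η : ℕ → ℝ)
    (hη : ∀ i, η i = γ * (f (x i) - f xstar) / ‖f' (x i)‖ ^ 2)
    (hstep : ∀ i, x (i + 1) = x i - η i • f' (x i))
    (k : ℕ) (hk : 0 < k)
    (hgne : ∀ i < k, f' (x i) ≠ 0) :
    f ((∑ i ∈ Finset.range k, η i)⁻¹ • ∑ i ∈ Finset.range k, η i • x i) - f xstar ≤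
      ‖x 0 - xstar‖ ^ 2 / ((2 - γ) * ∑ i ∈ Finset.range k, η i) := by
  set S := ∑ i ∈ Finset.range k, η i with hS
  -- positivity of the suboptimality gaps
  have hδpos : ∀ i < k, 0 < f (x i) - f xstar := by
    intro i hi
    rcases lt_or_eq_of_le (hstar (x i)) with h | h
    · linarith
    · exfalso
      apply hgne i hi
      have hmin : IsLocalMin f (x i) := Filter.Eventually.of_forall fun z => h ▸ hstar z
      have h0 : (InnerProductSpace.toDual ℝ _ (f' (x i))) = 0 :=
        hmin.hasFDerivAt_eq_zero (hgrad (x i)).hasFDerivAt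
      exact (InnerProductSpace.toDual ℝ _).map_eq_zero_iff.mp h0
  have hηpos : ∀ i < k, 0 < η i := by
    intro i hi
    rw [hη i]
    exact div_pos (mul_pos hγpos (hδpos i hi)) (pow_pos (norm_pos_iff.mpr (hgne i hi)) 2)
  have hSpos : 0 < S :=
    Finset.sum_pos (fun i hi => hηpos i (Finset.mem_range.mp hi)) (by simp [hk.ne'])
  -- one-step descent inequality
  have hdesc : ∀ i < k, (2 - γ) * (η i * (f (x i) - f xstar)) ≤
      ‖x i - xstar‖ ^ 2 - ‖x (i + 1) - xstar‖ ^ 2 := by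
    intro i hi
    have hgi : f (x i) - f xstar ≤ ⟪f' (x i), x i - xstar⟫ := by
      have := grad_first_order hconv (hgrad (x i)) xstar
      have hneg : ⟪f' (x i), xstar - x i⟫ = -⟪f' (x i), x i - xstar⟫ := by
        rw [show xstar - x i = -(x i - xstar) by abel, inner_neg_right]
      linarith [hneg ▸ this]
    have hηnorm : η i * ‖f' (x i)‖ ^ 2 = γ * (f (x i) - f xstar) := by
      have hn : ‖f' (x i)‖ ^ 2 ≠ 0 := pow_ne_zero 2 (norm_ne_zero_iff.mpr (hgne i hi))
      rw [hη i]
      field_simp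
      exact mul_div_cancel_right₀ _ (norm_ne_zero_iff.mpr (hgne i hi))
    have hexp : ‖x (i + 1) - xstar‖ ^ 2 =
        ‖x i - xstar‖ ^ 2 - 2 * (η i * ⟪f' (x i), x i - xstar⟫) + η i ^ 2 * ‖f' (x i)‖ ^ 2 := by
      rw [hstep i]
      have : x i - η i • f' (x i) - xstar = (x i - xstar) - η i • f' (x i) := by abel
      rw [this, norm_sub_sq_real, real_inner_smul_right, norm_smul,
        real_inner_comm (x i - xstar) (f' (x i)), mul_pow, Real.norm_eq_abs, sq_abs]
    have hη2 : η i ^ 2 * ‖f' (x i)‖ ^ 2 = η i * (γ * (f (x i) - f xstar)) := by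
      rw [← hηnorm]; ring
    have hηi := hηpos i hi
    nlinarith [mul_le_mul_of_nonneg_left hgi hηi.le]
  -- telescoping sum
  have hsum : (2 - γ) * ∑ i ∈ Finset.range k, η i * (f (x i) - f xstar) ≤
      ‖x 0 - xstar‖ ^ 2 := by
    rw [Finset.mul_sum]
    calc ∑ i ∈ Finset.range k, (2 - γ) * (η i * (f (x i) - f xstar))
        ≤ ∑ i ∈ Finset.range k, (‖x i - xstar‖ ^ 2 - ‖x (i + 1) - xstar‖ ^ 2) :=
          Finset.sum_le_sum fun i hi => hdesc i (Finset.mem_range.mp hi)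
      _ = ‖x 0 - xstar‖ ^ 2 - ‖x k - xstar‖ ^ 2 :=
          Finset.sum_range_sub' (fun i => ‖x i - xstar‖ ^ 2) k
      _ ≤ ‖x 0 - xstar‖ ^ 2 := by nlinarith [sq_nonneg ‖x k - xstar‖]
  -- Jensen's inequality
  have hpt : S⁻¹ • ∑ i ∈ Finset.range k, η i • x i =
      ∑ i ∈ Finset.range k, (η i / S) • x i := by
    rw [Finset.smul_sum]
    refine Finset.sum_congr rfl fun i hi => ?_
    rw [smul_smul, div_eq_inv_mul]
  have hwsum : ∑ i ∈ Finset.range k, η i / S = 1 := by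
    rw [← Finset.sum_div, ← hS, div_self hSpos.ne']
  have hjensen : f (S⁻¹ • ∑ i ∈ Finset.range k, η i • x i) ≤
      ∑ i ∈ Finset.range k, (η i / S) * f (x i) := by
    rw [hpt]
    exact hconv.map_sum_le
      (fun i hi => div_nonneg (hηpos i (Finset.mem_range.mp hi)).le hSpos.le)
      hwsum (fun i _ => Set.mem_univ _)
  have hfin : ∑ i ∈ Finset.range k, (η i / S) * f (x i) - f xstar =
      (∑ i ∈ Finset.range k, η i * (f (x i) - f xstar)) / S := by
    rw [Finset.sum_div]
    rw [eq_comm]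
    calc ∑ i ∈ Finset.range k, η i * (f (x i) - f xstar) / S
        = ∑ i ∈ Finset.range k, ((η i / S) * f (x i) - (η i / S) * f xstar) := by
          refine Finset.sum_congr rfl fun i hi => ?_; ring
      _ = ∑ i ∈ Finset.range k, (η i / S) * f (x i) -
          (∑ i ∈ Finset.range k, η i / S) * f xstar := by
          rw [Finset.sum_sub_distrib, Finset.sum_mul]
      _ = ∑ i ∈ Finset.range k, (η i / S) * f (x i) - f xstar := by rw [hwsum, one_mul]
  have h2γ : 0 < 2 - γ := by linarith
  calc f (S⁻¹ • ∑ i ∈ Finset.range k, η i • x i) - f xstar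
      ≤ ∑ i ∈ Finset.range k, (η i / S) * f (x i) - f xstar := by linarith [hjensen]
    _ = (∑ i ∈ Finset.range k, η i * (f (x i) - f xstar)) / S := hfin
    _ ≤ (‖x 0 - xstar‖ ^ 2 / (2 - γ)) / S := by
        gcongr
        rw [le_div_iff₀ h2γ]
        linarith [hsum]
    _ = ‖x 0 - xstar‖ ^ 2 / ((2 - γ) * S) := by rw [div_div]
end

section
/- Let B be a positive semi-definite d×d real matrix, c ∈ ℝ^d, and f(x) = (1/2)·xᵀBx − cᵀx, so ∇f(x) = Bx − c. Let x_i ∈ ℝ^d with ∇f(x_i) ≠ 0, η > 0, and x_{i+1} = x_i − η∇f(x_i). Then the path-wise directional smoothness satisfies A(x_i, x_{i+1}) = ⟨∇f(x_i), B∇f(x_i)⟩ / ⟨∇f(x_i), ∇f(x_i)⟩, i.e. it equals the Rayleigh quotient of B at ∇f(x_i), whose reciprocal is the Cauchy step-size. -/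
open scoped RealInnerProductSpace

/-- **Path-wise directional smoothness of a convex quadratic is the Rayleigh quotient**
(Lemma: quadratic-pathwise-direction-smoothness).
For `f(x) = (1/2) xᵀBx - cᵀx` with `B` positive semi-definite (so `∇f(x) = Bx - c`) and a
gradient step `x_{i+1} = x_i - η ∇f(x_i)` with `η > 0` and `∇f(x_i) ≠ 0`, the path-wise
directional smoothness `A(x_i, x_{i+1}) = sup_{t ∈ (0,1]} ⟪∇f(x_i + t(x_{i+1} - x_i)) - ∇f(x_i),
x_{i+1} - x_i⟫ / (t ‖x_{i+1} - x_i‖²)` equals the Rayleigh quotient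
`⟪∇f(x_i), B ∇f(x_i)⟫ / ⟪∇f(x_i), ∇f(x_i)⟫`. -/
theorem quadratic_pathwise_directional_smoothness {d : ℕ}
    (B : Matrix (Fin d) (Fin d) ℝ) (hB : B.PosSemidef)
    (c : EuclideanSpace ℝ (Fin d))
    (f : EuclideanSpace ℝ (Fin d) → ℝ)
    (hf : ∀ z, f z = 1 / 2 * ⟪z, Matrix.toEuclideanLin B z⟫ - ⟪c, z⟫)
    (g : EuclideanSpace ℝ (Fin d) → EuclideanSpace ℝ (Fin d))
    (hg : ∀ z, g z = Matrix.toEuclideanLin B z - c)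
    (xi : EuclideanSpace ℝ (Fin d)) (hgi : g xi ≠ 0)
    (η : ℝ) (hη : 0 < η)
    (xi1 : EuclideanSpace ℝ (Fin d)) (hstep : xi1 = xi - η • g xi) :
    sSup {r : ℝ | ∃ t ∈ Set.Ioc (0:ℝ) 1,
        r = ⟪g (xi + t • (xi1 - xi)) - g xi, xi1 - xi⟫ / (t * ‖xi1 - xi‖ ^ 2)} =
      ⟪g xi, Matrix.toEuclideanLin B (g xi)⟫ / ⟪g xi, g xi⟫ := by
  set L := Matrix.toEuclideanLin B with hL
  have hgnorm : ‖g xi‖ ≠ 0 := norm_ne_zero_iff.mpr hgi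
  have hv : xi1 - xi = (-η) • g xi := by
    rw [hstep]; module
  have hgdiff : ∀ t : ℝ, g (xi + t • (xi1 - xi)) - g xi = t • L (xi1 - xi) := by
    intro t
    simp only [hg, map_add, map_smul]
    abel
  have hinner : ∀ t : ℝ,
      ⟪g (xi + t • (xi1 - xi)) - g xi, xi1 - xi⟫ = t * (η ^ 2 * ⟪g xi, L (g xi)⟫) := by
    intro t
    rw [hgdiff, hv, map_smul, real_inner_smul_left, real_inner_smul_left,
      real_inner_smul_right, real_inner_comm]
    ring
  have hw2 : ‖xi1 - xi‖ ^ 2 = η ^ 2 * ‖g xi‖ ^ 2 := by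
    rw [hv, norm_smul]
    simp [abs_of_pos hη]
    ring
  have hval : ∀ t ∈ Set.Ioc (0:ℝ) 1,
      ⟪g (xi + t • (xi1 - xi)) - g xi, xi1 - xi⟫ / (t * ‖xi1 - xi‖ ^ 2)
        = ⟪g xi, L (g xi)⟫ / ⟪g xi, g xi⟫ := by
    intro t ht
    rw [hinner, hw2, real_inner_self_eq_norm_sq]
    rw [mul_div_mul_left _ _ ht.1.ne',
      mul_div_mul_left _ _ (pow_ne_zero 2 hη.ne')]
  have hset : {r : ℝ | ∃ t ∈ Set.Ioc (0:ℝ) 1,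
      r = ⟪g (xi + t • (xi1 - xi)) - g xi, xi1 - xi⟫ / (t * ‖xi1 - xi‖ ^ 2)}
      = {⟪g xi, L (g xi)⟫ / ⟪g xi, g xi⟫} := by
    ext r
    simp only [Set.mem_setOf_eq, Set.mem_singleton_iff]
    constructor
    · rintro ⟨t, ht, rfl⟩
      exact hval t ht
    · rintro rfl
      exact ⟨1, ⟨one_pos, le_refl 1⟩, (hval 1 ⟨one_pos, le_refl 1⟩).symm⟩
  rw [hset, csSup_singleton]
end
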